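/- arXiv:2006.01858 — 2 statements merged into one kernel-verified Lean document; each statement's English description precedes it below -/
import Mathlib

section
/- Let Λ ∈ ℝ^{m×m} be essentially non-negative and let (V_t) be an ℝ^m-valued process such that each component of F_t := exp(Λ t) V_t is a right-continuous non-negative supermartingale. Then for every T ≥ 0, every positive vector γ ∈ ℝ^m, and every index i, P(∃ t ≥ T : V_t ≥ exp(−Λ t) γ componentwise) ≤ E[(V_0)_i] / γ_i. -/
/-!
Since `Λ` is essentially non-negative, `exp (t Λ)` is entrywise non-negative for `t ≥ 0`: adding
`c • 1` makes `Λ` non-negative, and the commuting scalar shift only contributes the factor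
`exp (-c t) > 0`. Hence `V t ≥ exp (-t Λ) γ` forces `exp (t Λ) V t ≥ γ`, so the event lies in
`{∃ t, γ i ≤ F t i}` for the non-negative supermartingale `F t = exp (t Λ) V t`. Doob's maximal
inequality bounds its probability by `E[F 0 i] / γ i = E[V 0 i] / γ i`. In discrete time this is
optional stopping at the first passage above the level; in continuous time it follows along the
nested dyadic grids, whose union is dense, by right-continuity.
-/

open MeasureTheory Filter Topology Set
open scoped NNReal ENNReal

namespace Matrix
variable {n : Type*} [Fintype n] [DecidableEq n]

theorem exp_apply_nonneg {M : Matrix n n ℝ} (hM : ∀ i j, 0 ≤ M i j) (i j : n) :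
    0 ≤ NormedSpace.exp M i j := by
  open scoped Norms.Operator in
  have hsum : HasSum (fun k : ℕ => ((k.factorial : ℝ)⁻¹ • M ^ k) i j) (NormedSpace.exp M i j) :=
    Pi.hasSum.mp (Pi.hasSum.mp (NormedSpace.exp_series_hasSum_exp' (𝕂 := ℝ) M) i) j
  exact hsum.nonneg fun k => mul_nonneg (by positivity) (pow_apply_nonneg hM k i j)

theorem exp_apply_nonneg_of_offDiag_nonneg {M : Matrix n n ℝ}
    (hM : ∀ i j, i ≠ j → 0 ≤ M i j) (i j : n) : 0 ≤ NormedSpace.exp M i j := by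
  obtain ⟨c, hc⟩ := Finite.exists_le fun l => -M l l
  have hshift : ∀ k l, 0 ≤ (M + c • 1) k l := by
    intro k l
    rcases eq_or_ne k l with rfl | hkl
    · simpa [neg_le_iff_add_nonneg'] using hc k
    · simpa [one_apply_ne hkl] using hM k l hkl
  have hexp : NormedSpace.exp M = NormedSpace.exp (M + c • 1) * NormedSpace.exp ((-c) • 1) := by
    rw [← exp_add_of_commute _ _ ((Commute.one_right _).smul_right _)]
    congr 1
    module
  rw [hexp, smul_one_eq_diagonal (-c), exp_diagonal, mul_diagonal]
  exact mul_nonneg (exp_apply_nonneg hshift i j)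
    (by simpa [← Real.exp_eq_exp_ℝ] using (Real.exp_pos (-c)).le)

omit [DecidableEq n] in
theorem mulVec_mono {A : Matrix n n ℝ} (hA : ∀ i j, 0 ≤ A i j) {v w : n → ℝ} (hvw : v ≤ w) :
    A *ᵥ v ≤ A *ᵥ w := fun i =>
  dotProduct_le_dotProduct_of_nonneg_left hvw (hA i)

theorem exp_mulVec_exp_neg_mulVec (A : Matrix n n ℝ) (v : n → ℝ) :
    NormedSpace.exp A *ᵥ (NormedSpace.exp (-A) *ᵥ v) = v := by
  rw [mulVec_mulVec, exp_neg, mul_nonsing_inv _ ((isUnit_iff_isUnit_det _).mp (isUnit_exp A)),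
    one_mulVec]

theorem le_exp_smul_mulVec_of_exp_neg_smul_mulVec_le {M : Matrix n n ℝ}
    (hM : ∀ i j, i ≠ j → 0 ≤ M i j) {t : ℝ} (ht : 0 ≤ t) {γ v : n → ℝ}
    (h : NormedSpace.exp ((-t) • M) *ᵥ γ ≤ v) : γ ≤ NormedSpace.exp (t • M) *ᵥ v := by
  have hpos := exp_apply_nonneg_of_offDiag_nonneg (M := t • M) fun i j hij =>
    mul_nonneg ht (hM i j hij)
  calc γ = NormedSpace.exp (t • M) *ᵥ (NormedSpace.exp ((-t) • M) *ᵥ γ) := by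
        rw [neg_smul, exp_mulVec_exp_neg_mulVec]
    _ ≤ NormedSpace.exp (t • M) *ᵥ v := mulVec_mono hpos h

end Matrix

theorem NNReal.exists_dyadic_mem_of_mem_nhdsGE {t : ℝ≥0} {U : Set ℝ≥0} (hU : U ∈ 𝓝[≥] t) :
    ∃ n k : ℕ, k ≤ 4 ^ n ∧ (k : ℝ≥0) / 2 ^ n ∈ U := by
  have htwo : Tendsto (fun n : ℕ => (2 : ℝ≥0) ^ n) atTop atTop :=
    tendsto_pow_atTop_atTop_of_one_lt one_lt_two
  have hlower : ∀ n : ℕ, t ≤ (⌈t * 2 ^ n⌉₊ : ℝ≥0) / 2 ^ n := fun n =>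
    (le_div_iff₀ (by positivity)).2 (Nat.le_ceil _)
  have hupper : ∀ n : ℕ, (⌈t * 2 ^ n⌉₊ : ℝ≥0) / 2 ^ n ≤ t + (2 ^ n)⁻¹ := fun n => by
    rw [div_le_iff₀ (by positivity), add_mul, inv_mul_cancel₀ (by positivity)]
    exact (Nat.ceil_lt_add_one zero_le).le
  have hlim : Tendsto (fun n : ℕ => (⌈t * 2 ^ n⌉₊ : ℝ≥0) / 2 ^ n) atTop (𝓝[≥] t) := by
    refine tendsto_nhdsWithin_iff.2 ⟨?_, Eventually.of_forall hlower⟩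
    refine tendsto_of_tendsto_of_tendsto_of_le_of_le tendsto_const_nhds ?_ hlower hupper
    simpa using tendsto_const_nhds.add (tendsto_inv_atTop_zero.comp htwo)
  have hbound : ∀ᶠ n : ℕ in atTop, ⌈t * 2 ^ n⌉₊ ≤ 4 ^ n :=
    (htwo.eventually_ge_atTop t).mono fun n hn => Nat.ceil_le.2 <| by
      rw [Nat.cast_pow, show ((4 : ℕ) : ℝ≥0) = 2 * 2 by norm_num, mul_pow]
      gcongr
  obtain ⟨n, hnU, hn⟩ := ((hlim.eventually hU).and hbound).exists
  exact ⟨n, _, hn, hnU⟩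

namespace MeasureTheory

variable {Ω : Type*} {m0 : MeasurableSpace Ω} {μ : Measure Ω}

def Filtration.comp {ι κ : Type*} [Preorder ι] [Preorder κ] (ℱ : Filtration ι m0) {u : κ → ι}
    (hu : Monotone u) : Filtration κ m0 where
  seq k := ℱ (u k)
  mono' _ _ hkl := ℱ.mono (hu hkl)
  le' k := ℱ.le (u k)

theorem Supermartingale.comp {ι κ : Type*} [Preorder ι] [Preorder κ] {ℱ : Filtration ι m0}
    {F : ι → Ω → ℝ} (hF : Supermartingale F ℱ μ) {u : κ → ι} (hu : Monotone u) :
    Supermartingale (fun k => F (u k)) (ℱ.comp hu) μ :=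
  ⟨fun k => hF.stronglyAdapted (u k), fun _ _ hkl => hF.condExp_ae_le (hu hkl),
    fun k => hF.integrable (u k)⟩

theorem Supermartingale.maximal_ineq [IsFiniteMeasure μ] {𝒢 : Filtration ℕ m0} {f : ℕ → Ω → ℝ}
    (hf : Supermartingale f 𝒢 μ) (hnonneg : 0 ≤ f) (ε : ℝ≥0) (n : ℕ) :
    ε * μ {ω | ∃ k ≤ n, (ε : ℝ) ≤ f k ω} ≤ ENNReal.ofReal (∫ ω, f 0 ω ∂μ) := by
  set τ : Ω → ℕ∞ := fun ω => (hittingBtwn f {y | (ε : ℝ) ≤ y} 0 n ω : ℕ)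
  have hτ : IsStoppingTime 𝒢 τ :=
    hf.stronglyAdapted.adapted.isStoppingTime_hittingBtwn measurableSet_Ici
  have hτn : ∀ ω, τ ω ≤ n := fun ω => WithTop.coe_le_coe.2 (hittingBtwn_le ω)
  have hint : Integrable (stoppedValue f τ) μ := integrable_stoppedValue ℕ hτ hf.integrable hτn
  have hsub : {ω | ∃ k ≤ n, (ε : ℝ) ≤ f k ω} ⊆ {ω | (ε : ℝ) ≤ stoppedValue f τ ω} :=
    fun ω ⟨k, hk, hεk⟩ => stoppedValue_hittingBtwn_mem ⟨k, ⟨zero_le, hk⟩, hεk⟩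
  -- optional stopping for the submartingale `-f` at the bounded times `0 ≤ τ`
  have hstop : ∫ ω, stoppedValue f τ ω ∂μ ≤ ∫ ω, f 0 ω ∂μ := by
    have h := hf.neg.expected_stoppedValue_mono (isStoppingTime_const 𝒢 0) hτ
      (fun _ => zero_le) hτn
    change ∫ ω, -f 0 ω ∂μ ≤ ∫ ω, -stoppedValue f τ ω ∂μ at h
    rwa [integral_neg, integral_neg, neg_le_neg_iff] at h
  rw [← ofReal_measureReal, ← ENNReal.ofReal_coe_nnreal, ← ENNReal.ofReal_mul ε.coe_nonneg]
  refine ENNReal.ofReal_le_ofReal ?_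
  calc (ε : ℝ) * μ.real {ω | ∃ k ≤ n, (ε : ℝ) ≤ f k ω}
      ≤ ε * μ.real {ω | (ε : ℝ) ≤ stoppedValue f τ ω} :=
        mul_le_mul_of_nonneg_left (measureReal_mono hsub) ε.coe_nonneg
    _ ≤ ∫ ω, stoppedValue f τ ω ∂μ :=
      mul_meas_ge_le_integral_of_nonneg (ae_of_all _ fun ω => hnonneg _ _) hint ε
    _ ≤ ∫ ω, f 0 ω ∂μ := hstop

theorem Supermartingale.maximal_ineq_dyadic [IsFiniteMeasure μ] {ℱ : Filtration ℝ≥0 m0}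
    {F : ℝ≥0 → Ω → ℝ} (hF : Supermartingale F ℱ μ) (hnonneg : 0 ≤ F) (ε : ℝ≥0) :
    ε * μ (⋃ n : ℕ, {ω | ∃ k : ℕ, k ≤ 4 ^ n ∧ (ε : ℝ) ≤ F ((k : ℝ≥0) / 2 ^ n) ω}) ≤
      ENNReal.ofReal (∫ ω, F 0 ω ∂μ) := by
  have hmono : Monotone fun n : ℕ =>
      {ω | ∃ k : ℕ, k ≤ 4 ^ n ∧ (ε : ℝ) ≤ F ((k : ℝ≥0) / 2 ^ n) ω} := by
    refine monotone_nat_of_le_succ fun n ω ⟨k, hk, hkε⟩ => ⟨2 * k, ?_, ?_⟩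
    · rw [pow_succ]; omega
    · convert hkε using 2
      rw [pow_succ]; push_cast; field_simp
  rw [hmono.measure_iUnion, ENNReal.mul_iSup]
  refine iSup_le fun n => ?_
  have hgrid : Monotone fun k : ℕ => (k : ℝ≥0) / 2 ^ n := fun a b hab =>
    div_le_div_of_nonneg_right (Nat.cast_le.2 hab) (by positivity)
  simpa using (hF.comp hgrid).maximal_ineq (fun k ω => hnonneg _ _) ε (4 ^ n)

theorem Supermartingale.maximal_ineq_of_rightContinuous [IsFiniteMeasure μ]
    {ℱ : Filtration ℝ≥0 m0} {F : ℝ≥0 → Ω → ℝ} (hF : Supermartingale F ℱ μ) (hnonneg : 0 ≤ F)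
    (hrc : ∀ ω t, ContinuousWithinAt (F · ω) (Ici t) t) (ε : ℝ≥0) :
    ε * μ {ω | ∃ t, (ε : ℝ) ≤ F t ω} ≤ ENNReal.ofReal (∫ ω, F 0 ω ∂μ) := by
  refine ENNReal.mul_le_of_forall_lt fun a ha b hb => ?_
  lift a to ℝ≥0 using (ha.trans ENNReal.coe_lt_top).ne
  have hsub : {ω | ∃ t, (ε : ℝ) ≤ F t ω} ⊆
      ⋃ n : ℕ, {ω | ∃ k : ℕ, k ≤ 4 ^ n ∧ (a : ℝ) ≤ F ((k : ℝ≥0) / 2 ^ n) ω} := by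
    rintro ω ⟨t, ht⟩
    have hat : (a : ℝ) < F t ω := (NNReal.coe_lt_coe.2 (ENNReal.coe_lt_coe.1 ha)).trans_le ht
    obtain ⟨n, k, hk, hka⟩ := NNReal.exists_dyadic_mem_of_mem_nhdsGE (hrc ω t (Ioi_mem_nhds hat))
    exact mem_iUnion.2 ⟨n, k, hk, le_of_lt hka⟩
  calc (a : ℝ≥0∞) * b
      ≤ a * μ (⋃ n : ℕ, {ω | ∃ k : ℕ, k ≤ 4 ^ n ∧ (a : ℝ) ≤ F ((k : ℝ≥0) / 2 ^ n) ω}) := by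
        gcongr; exact hb.le.trans (measure_mono hsub)
    _ ≤ ENNReal.ofReal (∫ ω, F 0 ω ∂μ) := hF.maximal_ineq_dyadic hnonneg a

end MeasureTheory

theorem stmt12 {Ω : Type*} {m0 : MeasurableSpace Ω} (μ : Measure Ω)
    [IsProbabilityMeasure μ] (ℱ : Filtration ℝ≥0 m0)
    {m : ℕ} (Λ : Matrix (Fin m) (Fin m) ℝ)
    (hΛ : ∀ i j, i ≠ j → 0 ≤ Λ i j)
    (V : ℝ≥0 → Ω → Fin m → ℝ)
    (hsup : ∀ i, Supermartingale
      (fun (t : ℝ≥0) ω => (NormedSpace.exp ((t : ℝ) • Λ)).mulVec (V t ω) i) ℱ μ)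
    (hrc : ∀ i ω, ∀ t : ℝ≥0, ContinuousWithinAt
      (fun s : ℝ≥0 => (NormedSpace.exp ((s : ℝ) • Λ)).mulVec (V s ω) i) (Set.Ici t) t)
    (hnn : ∀ (t : ℝ≥0) ω i, 0 ≤ (NormedSpace.exp ((t : ℝ) • Λ)).mulVec (V t ω) i)
    (T : ℝ≥0) (γ : Fin m → ℝ) (hγ : ∀ i, 0 < γ i) (i : Fin m) :
    μ {ω | ∃ t : ℝ≥0, T ≤ t ∧ (NormedSpace.exp ((-(t : ℝ)) • Λ)).mulVec γ ≤ V t ω} ≤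
      ENNReal.ofReal ((∫ ω, V 0 ω i ∂μ) / γ i) := by
  have hsub : {ω | ∃ t : ℝ≥0, T ≤ t ∧ (NormedSpace.exp ((-(t : ℝ)) • Λ)).mulVec γ ≤ V t ω} ⊆
      {ω | ∃ t : ℝ≥0,
        ((γ i).toNNReal : ℝ) ≤ (NormedSpace.exp ((t : ℝ) • Λ)).mulVec (V t ω) i} := by
    rintro ω ⟨t, -, hle⟩
    refine ⟨t, ?_⟩
    rw [Real.coe_toNNReal _ (hγ i).le]
    exact Matrix.le_exp_smul_mulVec_of_exp_neg_smul_mulVec_le hΛ t.coe_nonneg hle i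
  have hmax := (hsup i).maximal_ineq_of_rightContinuous (fun t ω => hnn t ω i) (hrc i)
    (γ i).toNNReal
  simp only [NNReal.coe_zero, zero_smul, NormedSpace.exp_zero, Matrix.one_mulVec] at hmax
  rw [ENNReal.ofReal_div_of_pos (hγ i), ENNReal.le_div_iff_mul_le (by simp [hγ i]) (by simp),
    mul_comm]
  exact (mul_le_mul' le_rfl (measure_mono hsub)).trans hmax
end

section
/- Let M ∈ ℝ^{m×m} be essentially non-negative with all eigenvalues having positive real part, and let l ∈ ℝ^m be a positive vector. Then for every index i, (exp(M T) l)_i → +∞ as T → ∞. -/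
/-!
Shifting `M` by a multiple of the identity makes it entrywise non-negative, so `exp (T • M)` is
entrywise non-negative for `T ≥ 0`. Let `P` be the set of indices `j` with `0 < exp M i j`. It
contains `i`, and no positive entry of `M` leads from `P` out of `P`; hence the block `A` of `M`
on `P` satisfies `exp (T • A) = (exp (T • M))|_P` and its spectrum lies in that of `M`. An
eigenvalue `z` of `A` gives `e^{T Re z} = ‖exp (T z)‖ ≤ ‖exp (T • A)‖`, so the entries of
`exp (T • M)` on `P × P` add up to something tending to `∞`. Finally
`(exp ((T + 1) • M) l) i = ∑ₖ (exp M) i k * (exp (T • M) l) k` is at least `ε δ` times that sum,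
where `ε` is the least entry of row `i` of `exp M` on `P` and `δ` the least entry of `l`.
-/

open Matrix Filter

namespace Matrix

variable {n : Type*}

section Block

variable [Fintype n] {R : Type*} {P : n → Prop} [DecidablePred P]

theorem toSquareBlockProp_mul [NonUnitalNonAssocSemiring R] {M : Matrix n n R}
    (hM : ∀ i, P i → ∀ j, ¬P j → M i j = 0) (N : Matrix n n R) :
    toSquareBlockProp (M * N) P = toSquareBlockProp M P * toSquareBlockProp N P := by
  ext i j
  simp only [toSquareBlockProp_def, of_apply, mul_apply]
  have hzero : ∑ k : {k // ¬P k}, M i k * N k j = 0 :=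
    Finset.sum_eq_zero fun k _ => by rw [hM i i.2 k k.2, zero_mul]
  rw [← Fintype.sum_subtype_add_sum_subtype P, hzero, add_zero]

theorem mul_sum_subtype_le_dotProduct [CommSemiring R] [PartialOrder R] [IsOrderedRing R]
    {a b : n → R} (ha : ∀ k, 0 ≤ a k) (hb : ∀ k, 0 ≤ b k) {c : R} (hc : ∀ k, P k → c ≤ a k) :
    c * ∑ k : {k // P k}, b k ≤ a ⬝ᵥ b := by
  calc c * ∑ k : {k // P k}, b k ≤ ∑ k : {k // P k}, a k * b k := by
        rw [Finset.mul_sum]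
        exact Finset.sum_le_sum fun k _ => mul_le_mul_of_nonneg_right (hc k k.2) (hb k)
    _ ≤ ∑ k : {k // P k}, a k * b k + ∑ k : {k // ¬P k}, a k * b k :=
        le_add_of_nonneg_right (Finset.sum_nonneg fun k _ => mul_nonneg (ha k) (hb k))
    _ = a ⬝ᵥ b := Fintype.sum_subtype_add_sum_subtype P fun k => a k * b k

variable [DecidableEq n]

theorem toSquareBlockProp_pow [Semiring R] {M : Matrix n n R}
    (hM : ∀ i, P i → ∀ j, ¬P j → M i j = 0) (p : ℕ) :
    toSquareBlockProp (M ^ p) P = toSquareBlockProp M P ^ p := by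
  induction p with
  | zero => ext i j; simp [toSquareBlockProp_def, one_apply, Subtype.ext_iff]
  | succ p ih => rw [pow_succ', toSquareBlockProp_mul hM, ih, pow_succ']

theorem spectrum_toSquareBlockProp_subset {K : Type*} [Field K] {M : Matrix n n K}
    (hM : ∀ i, P i → ∀ j, ¬P j → M i j = 0) :
    spectrum K (toSquareBlockProp M P) ⊆ spectrum K M := by
  intro z hz
  rw [spectrum.mem_iff, isUnit_iff_isUnit_det] at hz ⊢
  intro hunit
  have hblock : toSquareBlockProp (algebraMap K (Matrix n n K) z - M) P
      = algebraMap K _ z - toSquareBlockProp M P := by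
    ext i j
    simp [toSquareBlockProp_def, algebraMap_matrix_apply, Subtype.ext_iff]
  have hdet := twoBlockTriangular_det' (algebraMap K (Matrix n n K) z - M) P fun i hi j hj => by
    have hij : i ≠ j := fun h => hj (h ▸ hi)
    simp [algebraMap_matrix_apply, hij, hM i hi j hj]
  rw [hdet, hblock] at hunit
  exact hz (isUnit_of_mul_isUnit_left hunit)

end Block

section Exp

variable [Fintype n] [DecidableEq n]

open NormedSpace

/- `FiniteDimensional.complete` is passed explicitly below: instance search does not find
completeness for the local `ℓ∞` operator norm. -/
theorem hasSum_exp_apply {𝕂 : Type*} [RCLike 𝕂] (A : Matrix n n 𝕂) (i j : n) :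
    HasSum (fun p : ℕ => (p.factorial : 𝕂)⁻¹ * (A ^ p) i j) (exp A i j) := by
  let : NormedRing (Matrix n n 𝕂) := Matrix.linftyOpNormedRing
  let : NormedAlgebra 𝕂 (Matrix n n 𝕂) := Matrix.linftyOpNormedAlgebra
  have h := @exp_series_hasSum_exp' 𝕂 (Matrix n n 𝕂) _ _ _ _ _
    (FiniteDimensional.complete 𝕂 (Matrix n n 𝕂)) A
  exact Pi.hasSum.1 (Pi.hasSum.1 h i) j

theorem toSquareBlockProp_exp {𝕂 : Type*} [RCLike 𝕂] {P : n → Prop} [DecidablePred P]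
    {M : Matrix n n 𝕂} (hM : ∀ i, P i → ∀ j, ¬P j → M i j = 0) :
    exp (toSquareBlockProp M P) = toSquareBlockProp (exp M) P := by
  ext i j
  refine (hasSum_exp_apply _ i j).unique ?_
  simp_rw [← toSquareBlockProp_pow hM]
  exact hasSum_exp_apply M i j

theorem exp_map_algebraMap {𝕂 : Type*} [RCLike 𝕂] (A : Matrix n n ℝ) :
    exp (A.map (algebraMap ℝ 𝕂)) = (exp A).map (algebraMap ℝ 𝕂) := by
  ext i j
  refine (hasSum_exp_apply _ i j).unique ?_
  convert (RCLike.hasSum_ofReal 𝕂).2 (hasSum_exp_apply A i j) using 1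
  · ext p
    rw [← Matrix.map_pow A (algebraMap ℝ 𝕂) p]
    simp [RCLike.algebraMap_eq_ofReal]
  · simp [RCLike.algebraMap_eq_ofReal]

theorem norm_le_sum_norm_apply_of_mem_spectrum {𝕜 : Type*} [NontriviallyNormedField 𝕜]
    [CompleteSpace 𝕜] {X : Matrix n n 𝕜} {z : 𝕜} (hz : z ∈ spectrum 𝕜 X) :
    ‖z‖ ≤ ∑ i, ∑ j, ‖X i j‖ := by
  cases isEmpty_or_nonempty n
  · simp [spectrum.of_subsingleton] at hz
  let : NormedRing (Matrix n n 𝕜) := Matrix.linftyOpNormedRing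
  let : NormedAlgebra 𝕜 (Matrix n n 𝕜) := Matrix.linftyOpNormedAlgebra
  calc ‖z‖ ≤ ‖X‖ :=
        @spectrum.norm_le_norm_of_mem 𝕜 _ _ _ _ (FiniteDimensional.complete 𝕜 _) _ _ _ hz
    _ = ((Finset.univ.sup fun i => ∑ j, ‖X i j‖₊ : NNReal) : ℝ) := linfty_opNorm_def X
    _ ≤ ((∑ i, ∑ j, ‖X i j‖₊ : NNReal) : ℝ) := by
      gcongr
      exact Finset.sup_le fun i _ =>
        Finset.single_le_sum (f := fun i => ∑ j, ‖X i j‖₊) (fun _ _ => zero_le) (Finset.mem_univ i)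
    _ = ∑ i, ∑ j, ‖X i j‖ := by push_cast [coe_nnnorm]; rfl

theorem exp_re_le_sum_abs_exp_apply (A : Matrix n n ℝ) {z : ℂ}
    (hz : z ∈ spectrum ℂ (A.map (algebraMap ℝ ℂ))) :
    Real.exp z.re ≤ ∑ i, ∑ j, |exp A i j| := by
  have hexp : exp z ∈ spectrum ℂ ((exp A).map (algebraMap ℝ ℂ)) := by
    let : NormedRing (Matrix n n ℂ) := Matrix.linftyOpNormedRing
    let : NormedAlgebra ℂ (Matrix n n ℂ) := Matrix.linftyOpNormedAlgebra
    rw [← exp_map_algebraMap]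
    exact @spectrum.exp_mem_exp ℂ _ _ _ _ (FiniteDimensional.complete ℂ _) _ _ hz
  calc Real.exp z.re = ‖exp z‖ := by rw [← Complex.exp_eq_exp_ℂ, Complex.norm_exp]
    _ ≤ ∑ i, ∑ j, ‖(exp A).map (algebraMap ℝ ℂ) i j‖ :=
      norm_le_sum_norm_apply_of_mem_spectrum hexp
    _ = ∑ i, ∑ j, |exp A i j| := by simp

theorem tendsto_sum_abs_exp_smul_apply_atTop (A : Matrix n n ℝ) {z : ℂ}
    (hz : z ∈ spectrum ℂ (A.map (algebraMap ℝ ℂ))) (hre : 0 < z.re) :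
    Tendsto (fun T : ℝ => ∑ i, ∑ j, |exp (T • A) i j|) atTop atTop := by
  refine tendsto_atTop_mono' atTop ?_
    (Real.tendsto_exp_atTop.comp (tendsto_id.atTop_mul_const hre))
  filter_upwards [eventually_gt_atTop 0] with T hT
  have hunit : IsUnit (T : ℂ) := isUnit_iff_ne_zero.2 (by exact_mod_cast hT.ne')
  have hTz : (T : ℂ) * z ∈ spectrum ℂ ((T • A).map (algebraMap ℝ ℂ)) := by
    have := spectrum.smul_mem_smul_iff (r := hunit.unit).2 hz
    simpa [Matrix.map_smul] using this
  simpa [Complex.mul_re] using exp_re_le_sum_abs_exp_apply (T • A) hTz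

variable {N : Matrix n n ℝ}

theorem exp_apply_nonneg_of_nonneg (hN : ∀ i j, 0 ≤ N i j) (i j : n) : 0 ≤ exp N i j :=
  (hasSum_exp_apply N i j).nonneg fun p => mul_nonneg (by positivity) (pow_apply_nonneg hN p i j)

theorem exp_apply_pos_iff_of_nonneg (hN : ∀ i j, 0 ≤ N i j) {i j : n} :
    0 < exp N i j ↔ ∃ p, 0 < (N ^ p) i j := by
  constructor
  · intro hpos
    by_contra! h
    have : exp N i j ≤ 0 := hasSum_le (fun p => mul_nonpos_of_nonneg_of_nonpos (by positivity)
      (h p)) (hasSum_exp_apply N i j) hasSum_zero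
    linarith
  · rintro ⟨p, hp⟩
    exact (mul_pos (by positivity) hp).trans_le
      (le_hasSum (hasSum_exp_apply N i j) p fun q _ =>
        mul_nonneg (by positivity) (pow_apply_nonneg hN q i j))

theorem exp_apply_pos_of_exp_apply_pos_of_nonneg (hN : ∀ i j, 0 ≤ N i j) {i k j : n}
    (hik : 0 < exp N i k) (hkj : 0 < N k j) : 0 < exp N i j := by
  obtain ⟨p, hp⟩ := (exp_apply_pos_iff_of_nonneg hN).1 hik
  refine (exp_apply_pos_iff_of_nonneg hN).2 ⟨p + 1, ?_⟩
  rw [pow_succ, mul_apply]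
  exact Finset.sum_pos' (fun q _ => mul_nonneg (pow_apply_nonneg hN p i q) (hN q j))
    ⟨k, Finset.mem_univ k, mul_pos hp hkj⟩

theorem exp_eq_exp_smul_exp_sub_smul_one (M : Matrix n n ℝ) (c : ℝ) :
    exp M = Real.exp c • exp (M - c • 1) := by
  have hcomm : Commute (c • (1 : Matrix n n ℝ)) (M - c • 1) :=
    (Commute.one_left _).smul_left c
  calc exp M = exp (c • 1 + (M - c • 1)) := by rw [add_sub_cancel]
    _ = exp (c • 1) * exp (M - c • 1) := exp_add_of_commute _ _ hcomm
    _ = Real.exp c • exp (M - c • 1) := by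
      rw [smul_one_eq_diagonal, exp_diagonal, Pi.exp_def, ← Real.exp_eq_exp_ℝ,
        ← smul_one_eq_diagonal, smul_one_mul]

end Exp

def EssentiallyNonneg (M : Matrix n n ℝ) : Prop :=
  ∀ i j, i ≠ j → 0 ≤ M i j

namespace EssentiallyNonneg

variable {M : Matrix n n ℝ}

theorem smul (hM : M.EssentiallyNonneg) {T : ℝ} (hT : 0 ≤ T) : (T • M).EssentiallyNonneg :=
  fun i j hij => mul_nonneg hT (hM i j hij)

variable [Fintype n] [DecidableEq n]

open NormedSpace

theorem exists_exp_apply_eq (hM : M.EssentiallyNonneg) :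
    ∃ (c : ℝ) (N : Matrix n n ℝ), (∀ i j, 0 ≤ N i j) ∧ (∀ i j, i ≠ j → N i j = M i j) ∧
      ∀ i j, exp M i j = Real.exp c * exp N i j := by
  obtain ⟨c, hc⟩ := (Set.finite_range fun i => M i i).bddBelow
  refine ⟨c, M - c • 1, fun i j => ?_, fun i j hij => by simp [one_apply_ne hij],
    fun i j => by rw [exp_eq_exp_smul_exp_sub_smul_one M c]; rfl⟩
  rcases eq_or_ne i j with rfl | hij
  · simpa using hc ⟨i, rfl⟩
  · simpa [one_apply_ne hij] using hM i j hij

theorem exp_apply_nonneg (hM : M.EssentiallyNonneg) (i j : n) : 0 ≤ exp M i j := by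
  obtain ⟨c, N, hN, -, hexp⟩ := hM.exists_exp_apply_eq
  rw [hexp]
  exact mul_nonneg (Real.exp_pos c).le (exp_apply_nonneg_of_nonneg hN i j)

theorem exp_apply_self_pos (hM : M.EssentiallyNonneg) (i : n) : 0 < exp M i i := by
  obtain ⟨c, N, hN, -, hexp⟩ := hM.exists_exp_apply_eq
  rw [hexp]
  exact mul_pos (Real.exp_pos c) ((exp_apply_pos_iff_of_nonneg hN).2 ⟨0, by simp⟩)

theorem apply_eq_zero_of_exp_apply_pos (hM : M.EssentiallyNonneg) {i k j : n}
    (hk : 0 < exp M i k) (hj : ¬0 < exp M i j) : M k j = 0 := by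
  obtain ⟨c, N, hN, hNM, hexp⟩ := hM.exists_exp_apply_eq
  have hkj : k ≠ j := by rintro rfl; exact hj hk
  refine (hM k j hkj).antisymm' (not_lt.1 fun hpos => hj ?_)
  rw [hexp] at hk ⊢
  exact mul_pos (Real.exp_pos c) (exp_apply_pos_of_exp_apply_pos_of_nonneg hN
    ((mul_pos_iff_of_pos_left (Real.exp_pos c)).1 hk) (hNM k j hkj ▸ hpos))

theorem tendsto_sum_exp_smul_apply_atTop (hM : M.EssentiallyNonneg) {P : n → Prop}
    [DecidablePred P] [Nonempty {j // P j}] (hP : ∀ k, P k → ∀ j, ¬P j → M k j = 0)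
    (heig : ∀ z ∈ spectrum ℂ (M.map (algebraMap ℝ ℂ)), 0 < z.re) :
    Tendsto (fun T : ℝ => ∑ k : {j // P j}, ∑ j : {j // P j}, exp (T • M) k j) atTop atTop := by
  set A := toSquareBlockProp M P
  obtain ⟨z, hz⟩ := Module.End.exists_eigenvalue (toLin' (A.map (algebraMap ℝ ℂ)))
  replace hz := spectrum_toLin' (A.map (algebraMap ℝ ℂ)) ▸ hz.mem_spectrum
  have hzre : 0 < z.re := heig z <| spectrum_toSquareBlockProp_subset
    (fun k hk j hj => by simp [hP k hk j hj]) hz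
  have hexpA (T : ℝ) : exp (T • A) = toSquareBlockProp (exp (T • M)) P :=
    toSquareBlockProp_exp (M := T • M) fun k hk j hj => by simp [hP k hk j hj]
  refine (tendsto_sum_abs_exp_smul_apply_atTop A hz hzre).congr' ?_
  filter_upwards [eventually_ge_atTop 0] with T hT
  simp only [hexpA, toSquareBlockProp_def, of_apply,
    abs_of_nonneg ((hM.smul hT).exp_apply_nonneg _ _)]

theorem mul_sum_exp_smul_apply_le_exp_add_one_smul_mulVec (hM : M.EssentiallyNonneg)
    {P : n → Prop} [DecidablePred P] {i : n} {ε : ℝ} (hε : 0 ≤ ε)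
    (hεle : ∀ k, P k → ε ≤ exp M i k) {l : n → ℝ} {δ : ℝ} (hδ : 0 ≤ δ) (hl : ∀ j, δ ≤ l j)
    {T : ℝ} (hT : 0 ≤ T) :
    ε * (δ * ∑ k : {j // P j}, ∑ j : {j // P j}, exp (T • M) k j) ≤
      (exp ((T + 1) • M) *ᵥ l) i := by
  have hTM := hM.smul hT
  have hl₀ (j : n) : 0 ≤ l j := hδ.trans (hl j)
  rw [add_smul, one_smul, add_comm, exp_add_of_commute M (T • M) ((Commute.refl M).smul_right T),
    ← mulVec_mulVec, Finset.mul_sum]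
  calc _ ≤ ε * ∑ k : {j // P j}, (exp (T • M) *ᵥ l) k := by
        gcongr with k
        rw [mulVec, dotProduct_comm]
        exact mul_sum_subtype_le_dotProduct hl₀ (hTM.exp_apply_nonneg k) fun j _ => hl j
    _ ≤ exp M i ⬝ᵥ (exp (T • M) *ᵥ l) :=
        mul_sum_subtype_le_dotProduct (hM.exp_apply_nonneg i)
          (fun k => dotProduct_nonneg_of_nonneg (hTM.exp_apply_nonneg k) hl₀) hεle

end EssentiallyNonneg

end Matrix

theorem stmt16 {m : ℕ} (M : Matrix (Fin m) (Fin m) ℝ)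
    (hess : ∀ i j, i ≠ j → 0 ≤ M i j)
    (heig : ∀ z ∈ spectrum ℂ (M.map (algebraMap ℝ ℂ)), 0 < z.re)
    (l : Fin m → ℝ) (hl : ∀ i, 0 < l i) (i : Fin m) :
    Tendsto (fun T : ℝ => (NormedSpace.exp (T • M)).mulVec l i) atTop atTop := by
  have hM : M.EssentiallyNonneg := hess
  set P : Fin m → Prop := fun j => 0 < NormedSpace.exp M i j
  have hP : ∀ k, P k → ∀ j, ¬P j → M k j = 0 := fun _ hk _ hj =>
    hM.apply_eq_zero_of_exp_apply_pos hk hj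
  have : Nonempty {j // P j} := ⟨⟨i, hM.exp_apply_self_pos i⟩⟩
  have hgrowth := hM.tendsto_sum_exp_smul_apply_atTop hP heig
  obtain ⟨k₀, hk₀⟩ := Finite.exists_min fun k : {j // P j} => NormedSpace.exp M i k
  obtain ⟨j₀, hj₀⟩ := @Finite.exists_min _ _ _ ⟨i⟩ _ l
  have hshift : Tendsto (fun T : ℝ => T - 1) atTop atTop :=
    tendsto_atTop_add_const_right atTop (-1) tendsto_id
  refine tendsto_atTop_mono' _ ?_
    (((hgrowth.comp hshift).const_mul_atTop (hl j₀)).const_mul_atTop k₀.2)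
  filter_upwards [eventually_ge_atTop 1] with T hT
  simpa using hM.mul_sum_exp_smul_apply_le_exp_add_one_smul_mulVec k₀.2.le
    (fun k hk => hk₀ ⟨k, hk⟩) (hl j₀).le hj₀ (T := T - 1) (by linarith)
end
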